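/- With yⱼ as in (the GKN construction) and Ωf := (−A[f,1]_K(−1), B[f,1]_K(1)) ∈ ℂ², one has Ωy₁ = (0, −192B), Ωy₂ = (−192A, 0), Ωy₃ = (0, 48B(A+2)), Ωy₄ = (48A(B+2), 0). -/

import Mathlib

open Set Filter Topology intervalIntegral

noncomputable def krallAlpha (A B : ℝ) : ℝ := 3*A + 3*B + 6

noncomputable def krallPi (A B : ℝ) (x : ℝ) : ℝ :=
  (-6*A - 6*B - 12*A*B)*x^2 + (12*A - 12*B)*x + (12*A*B + 18*A + 18*B + 24)

/-- The sixth-order Krall differential expression, expanded form. -/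
noncomputable def lK (A B : ℝ) (y : ℝ → ℝ) (x : ℝ) : ℝ :=
  (x^2 - 1)^3 * iteratedDeriv 6 y x
  + 18*x*(x^2 - 1)^2 * iteratedDeriv 5 y x
  + (x^2 - 1)*((3*A + 3*B + 96)*x^2 - 3*A - 3*B - 36) * iteratedDeriv 4 y x
  + (24*A + 24*B + 168)*x*(x^2 - 1) * iteratedDeriv 3 y x
  + ((12*A*B + 42*A + 42*B + 72)*x^2 + (12*B - 12*A)*x - 12*A*B - 30*A - 30*B - 72)
      * iteratedDeriv 2 y x
  + ((24*A*B + 12*A + 12*B)*x + 12*B - 12*A) * deriv y x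

/-- The sixth-order Krall differential expression, Lagrangian symmetric form. -/
noncomputable def lKsym (A B : ℝ) (y : ℝ → ℝ) (x : ℝ) : ℝ :=
  - iteratedDeriv 3 (fun t => (1 - t^2)^3 * iteratedDeriv 3 y t) x
  + iteratedDeriv 2 (fun t => (1 - t^2)*(12 + krallAlpha A B * (1 - t^2)) * iteratedDeriv 2 y t) x
  - deriv (fun t => krallPi A B t * deriv y t) x

/-- Λ[f](x) = −((1−x²)³f‴(x))′ + (1−x²)(12+α(1−x²))f″(x). -/
noncomputable def LamK (A B : ℝ) (f : ℝ → ℝ) (x : ℝ) : ℝ :=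
  - deriv (fun t => (1 - t^2)^3 * iteratedDeriv 3 f t) x
  + (1 - x^2)*(12 + krallAlpha A B * (1 - x^2)) * iteratedDeriv 2 f x

/-- [f,1]_K(x) = −((1−x²)³f‴)″ + ((1−x²)(12+α(1−x²))f″)′ − π(x)f′(x). -/
noncomputable def concOne (A B : ℝ) (f : ℝ → ℝ) (x : ℝ) : ℝ :=
  - iteratedDeriv 2 (fun t => (1 - t^2)^3 * iteratedDeriv 3 f t) x
  + deriv (fun t => (1 - t^2)*(12 + krallAlpha A B * (1 - t^2)) * iteratedDeriv 2 f t) x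
  - krallPi A B x * deriv f x

/-- The bilinear concomitant [f,g]_K of the Krall expression (real-valued case). -/
noncomputable def conc (A B : ℝ) (f g : ℝ → ℝ) (x : ℝ) : ℝ :=
  concOne A B f x * g x - concOne A B g x * f x
  - LamK A B f x * deriv g x + LamK A B g x * deriv f x
  - (1 - x^2)^3 * (iteratedDeriv 3 f x * iteratedDeriv 2 g x
      - iteratedDeriv 2 f x * iteratedDeriv 3 g x)


/-! `[f,1]_K` depends only on the germ of `f`, and near each endpoint `yⱼ` agrees with a
polynomial `p`, so the limit of `[yⱼ,1]_K` at `±1` is `[p,1]_K(±1)`. There the term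
`((1-x²)³p‴)″` vanishes because of the triple zero of `(1-x²)³`, and the derivative of the
factor `(1-x²)(12+α(1-x²))` is `∓24`, so `[p,1]_K(±1) = ∓24 p″(±1) - π(±1) p′(±1)`. -/

open Polynomial

theorem Polynomial.iteratedDeriv_eval {𝕜 : Type*} [NontriviallyNormedField 𝕜] (p : 𝕜[X])
    (n : ℕ) : iteratedDeriv n (fun x => p.eval x) = fun x => (derivative^[n] p).eval x := by
  induction n with
  | zero => simp
  | succ n ih =>
    ext x
    rw [iteratedDeriv_succ, ih, Function.iterate_succ_apply', Polynomial.deriv]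

section Krall

variable {A B : ℝ}

variable (A B) in
noncomputable def krallPiPoly : ℝ[X] :=
  C (-6*A - 6*B - 12*A*B) * X^2 + C (12*A - 12*B) * X + C (12*A*B + 18*A + 18*B + 24)

theorem eval_krallPiPoly (x : ℝ) : (krallPiPoly A B).eval x = krallPi A B x := by
  simp [krallPiPoly, krallPi]

variable (A B) in
noncomputable def concOnePoly (p : ℝ[X]) : ℝ[X] :=
  -derivative^[2] ((1 - X^2)^3 * derivative^[3] p)
  + derivative ((1 - X^2) * (12 + C (krallAlpha A B) * (1 - X^2)) * derivative^[2] p)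
  - krallPiPoly A B * derivative p

theorem concOne_polynomial_eval (p : ℝ[X]) :
    concOne A B (fun x => p.eval x) = fun x => (concOnePoly A B p).eval x := by
  have h3 : (fun t => (1 - t^2)^3 * iteratedDeriv 3 (fun x => p.eval x) t)
      = fun t => ((1 - X^2)^3 * derivative^[3] p).eval t := by
    simp [Polynomial.iteratedDeriv_eval]
  have h2 : (fun t => (1 - t^2)*(12 + krallAlpha A B * (1 - t^2)) *
        iteratedDeriv 2 (fun x => p.eval x) t)
      = fun t => ((1 - X^2) * (12 + C (krallAlpha A B) * (1 - X^2)) * derivative^[2] p).eval t := by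
    simp [Polynomial.iteratedDeriv_eval]
  ext x
  rw [concOne, h3, h2]
  simp only [Polynomial.iteratedDeriv_eval, Polynomial.deriv]
  simp only [concOnePoly, eval_add, eval_sub, eval_neg, eval_mul, eval_krallPiPoly]

theorem eval_one_concOnePoly (p : ℝ[X]) :
    (concOnePoly A B p).eval 1
      = -24 * (derivative^[2] p).eval 1 - krallPi A B 1 * (derivative p).eval 1 := by
  simp only [concOnePoly, ← eval_krallPiPoly, Function.iterate_succ_apply',
    Function.iterate_zero_apply, derivative_mul, derivative_sub, derivative_add, derivative_pow,
    derivative_one, derivative_X, derivative_C, derivative_ofNat, eval_add, eval_sub, eval_mul,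
    eval_neg, eval_pow, eval_C, eval_X, eval_one, eval_ofNat]
  norm_num

theorem eval_neg_one_concOnePoly (p : ℝ[X]) :
    (concOnePoly A B p).eval (-1)
      = 24 * (derivative^[2] p).eval (-1) - krallPi A B (-1) * (derivative p).eval (-1) := by
  simp only [concOnePoly, ← eval_krallPiPoly, Function.iterate_succ_apply',
    Function.iterate_zero_apply, derivative_mul, derivative_sub, derivative_add, derivative_pow,
    derivative_one, derivative_X, derivative_C, derivative_ofNat, eval_add, eval_sub, eval_mul,
    eval_neg, eval_pow, eval_C, eval_X, eval_one, eval_ofNat]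
  norm_num

theorem concOne_eventuallyEq {f g : ℝ → ℝ} {x : ℝ} (h : f =ᶠ[𝓝 x] g) :
    concOne A B f =ᶠ[𝓝 x] concOne A B g := by
  filter_upwards [h.eventuallyEq_nhds] with t ht
  have h3 : (fun t => (1 - t^2)^3 * iteratedDeriv 3 f t)
      =ᶠ[𝓝 t] (fun t => (1 - t^2)^3 * iteratedDeriv 3 g t) :=
    EventuallyEq.rfl.fun_mul (ht.iteratedDeriv 3)
  have h2 : (fun t => (1 - t^2)*(12 + krallAlpha A B * (1 - t^2)) * iteratedDeriv 2 f t)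
      =ᶠ[𝓝 t] (fun t => (1 - t^2)*(12 + krallAlpha A B * (1 - t^2)) * iteratedDeriv 2 g t) :=
    EventuallyEq.rfl.fun_mul (ht.iteratedDeriv 2)
  simp only [concOne, h3.iteratedDeriv_eq 2, h2.deriv_eq, ht.deriv_eq]

theorem tendsto_concOne_of_eqOn_polynomial {f : ℝ → ℝ} {p : ℝ[X]} {s U : Set ℝ} {x₀ : ℝ}
    (hU : IsOpen U) (hUs : U ∈ 𝓝[s] x₀) (hf : ∀ x ∈ U, f x = p.eval x) :
    Tendsto (concOne A B f) (𝓝[s] x₀) (𝓝 ((concOnePoly A B p).eval x₀)) := by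
  have hloc : concOne A B (fun x => p.eval x) =ᶠ[𝓝[s] x₀] concOne A B f := by
    filter_upwards [hUs] with x hx
    refine (concOne_eventuallyEq ?_).eq_of_nhds
    filter_upwards [hU.mem_nhds hx] with t ht using (hf t ht).symm
  rw [concOne_polynomial_eval] at hloc
  exact ((Polynomial.continuous _).tendsto x₀).mono_left nhdsWithin_le_nhds |>.congr' hloc

theorem tendsto_concOne_neg_one {f : ℝ → ℝ} {p : ℝ[X]} {ε : ℝ} (hε : 0 < ε)
    (hf : ∀ x ∈ Ioo (-1 : ℝ) (-1 + ε), f x = p.eval x) :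
    Tendsto (concOne A B f) (𝓝[Ioo (-1 : ℝ) 1] (-1))
      (𝓝 (24 * (derivative^[2] p).eval (-1) - krallPi A B (-1) * (derivative p).eval (-1))) := by
  rw [← eval_neg_one_concOnePoly]
  refine tendsto_concOne_of_eqOn_polynomial isOpen_Ioo ?_ hf
  exact nhdsWithin_mono _ Ioo_subset_Ioi_self (Ioo_mem_nhdsGT (by linarith))

theorem tendsto_concOne_one {f : ℝ → ℝ} {p : ℝ[X]} {ε : ℝ} (hε : 0 < ε)
    (hf : ∀ x ∈ Ioo (1 - ε : ℝ) 1, f x = p.eval x) :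
    Tendsto (concOne A B f) (𝓝[Ioo (-1 : ℝ) 1] 1)
      (𝓝 (-24 * (derivative^[2] p).eval 1 - krallPi A B 1 * (derivative p).eval 1)) := by
  rw [← eval_one_concOnePoly]
  refine tendsto_concOne_of_eqOn_polynomial isOpen_Ioo ?_ hf
  exact nhdsWithin_mono _ Ioo_subset_Iio_self (Ioo_mem_nhdsLT (by linarith))

end Krall

theorem krall_Omega_values_general (A B : ℝ)
    (y₁ y₂ y₃ y₄ : ℝ → ℝ)
    (ε : ℝ) (hε : 0 < ε)
    (h₁l : ∀ x ∈ Set.Ioo (-1 : ℝ) (-1 + ε), y₁ x = 0)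
    (h₁r : ∀ x ∈ Set.Ioo (1 - ε : ℝ) 1, y₁ x = (1 - x^2)^2)
    (h₂l : ∀ x ∈ Set.Ioo (-1 : ℝ) (-1 + ε), y₂ x = (1 - x^2)^2)
    (h₂r : ∀ x ∈ Set.Ioo (1 - ε : ℝ) 1, y₂ x = 0)
    (h₃l : ∀ x ∈ Set.Ioo (-1 : ℝ) (-1 + ε), y₃ x = 0)
    (h₃r : ∀ x ∈ Set.Ioo (1 - ε : ℝ) 1, y₃ x = 1 - x^2)
    (h₄l : ∀ x ∈ Set.Ioo (-1 : ℝ) (-1 + ε), y₄ x = 1 - x^2)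
    (h₄r : ∀ x ∈ Set.Ioo (1 - ε : ℝ) 1, y₄ x = 0) :
    (∃ L₁ L₂ : ℝ,
      Filter.Tendsto (concOne A B y₁) (nhdsWithin (-1) (Set.Ioo (-1 : ℝ) 1)) (nhds L₁) ∧
      Filter.Tendsto (concOne A B y₁) (nhdsWithin 1 (Set.Ioo (-1 : ℝ) 1)) (nhds L₂) ∧
      (-A * L₁, B * L₂) = ((0 : ℝ), -192 * B)) ∧
    (∃ L₁ L₂ : ℝ,
      Filter.Tendsto (concOne A B y₂) (nhdsWithin (-1) (Set.Ioo (-1 : ℝ) 1)) (nhds L₁) ∧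
      Filter.Tendsto (concOne A B y₂) (nhdsWithin 1 (Set.Ioo (-1 : ℝ) 1)) (nhds L₂) ∧
      (-A * L₁, B * L₂) = ((-192 * A : ℝ), 0)) ∧
    (∃ L₁ L₂ : ℝ,
      Filter.Tendsto (concOne A B y₃) (nhdsWithin (-1) (Set.Ioo (-1 : ℝ) 1)) (nhds L₁) ∧
      Filter.Tendsto (concOne A B y₃) (nhdsWithin 1 (Set.Ioo (-1 : ℝ) 1)) (nhds L₂) ∧
      (-A * L₁, B * L₂) = ((0 : ℝ), 48 * B * (A + 2))) ∧
    (∃ L₁ L₂ : ℝ,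
      Filter.Tendsto (concOne A B y₄) (nhdsWithin (-1) (Set.Ioo (-1 : ℝ) 1)) (nhds L₁) ∧
      Filter.Tendsto (concOne A B y₄) (nhdsWithin 1 (Set.Ioo (-1 : ℝ) 1)) (nhds L₂) ∧
      (-A * L₁, B * L₂) = ((48 * A * (B + 2) : ℝ), 0)) := by
  have hzero : ∀ x, (0 : ℝ) = (0 : ℝ[X]).eval x := fun x => (eval_zero).symm
  have hbump : ∀ x : ℝ, (1 - x^2)^2 = ((1 - X^2)^2 : ℝ[X]).eval x := fun x => by simp
  have hquad : ∀ x : ℝ, 1 - x^2 = (1 - X^2 : ℝ[X]).eval x := fun x => by simp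
  refine ⟨⟨_, _, tendsto_concOne_neg_one hε (fun x hx => (h₁l x hx).trans (hzero x)),
      tendsto_concOne_one hε (fun x hx => (h₁r x hx).trans (hbump x)), ?_⟩,
    ⟨_, _, tendsto_concOne_neg_one hε (fun x hx => (h₂l x hx).trans (hbump x)),
      tendsto_concOne_one hε (fun x hx => (h₂r x hx).trans (hzero x)), ?_⟩,
    ⟨_, _, tendsto_concOne_neg_one hε (fun x hx => (h₃l x hx).trans (hzero x)),
      tendsto_concOne_one hε (fun x hx => (h₃r x hx).trans (hquad x)), ?_⟩,
    ⟨_, _, tendsto_concOne_neg_one hε (fun x hx => (h₄l x hx).trans (hquad x)),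
      tendsto_concOne_one hε (fun x hx => (h₄r x hx).trans (hzero x)), ?_⟩⟩ <;>
  · norm_num [Prod.ext_iff, krallPi, derivative_pow]
    ring

/-- with Ωf = (−A[f,1]_K(−1), B[f,1]_K(1)), where [f,1]_K(±1) are the
limits of [f,1]_K at ±1, one has Ωy₁ = (0,−192B), Ωy₂ = (−192A,0), Ωy₃ = (0,48B(A+2)),
Ωy₄ = (48A(B+2),0). -/
theorem krall_Omega_values (A B : ℝ) (hA : 0 < A) (hB : 0 < B)
    (y₁ y₂ y₃ y₄ : ℝ → ℝ)
    (h₁ : ContDiffOn ℝ 6 y₁ (Set.Ioo (-1 : ℝ) 1))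
    (h₂ : ContDiffOn ℝ 6 y₂ (Set.Ioo (-1 : ℝ) 1))
    (h₃ : ContDiffOn ℝ 6 y₃ (Set.Ioo (-1 : ℝ) 1))
    (h₄ : ContDiffOn ℝ 6 y₄ (Set.Ioo (-1 : ℝ) 1))
    (ε : ℝ) (hε : 0 < ε)
    (h₁l : ∀ x ∈ Set.Ioo (-1 : ℝ) (-1 + ε), y₁ x = 0)
    (h₁r : ∀ x ∈ Set.Ioo (1 - ε : ℝ) 1, y₁ x = (1 - x^2)^2)
    (h₂l : ∀ x ∈ Set.Ioo (-1 : ℝ) (-1 + ε), y₂ x = (1 - x^2)^2)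
    (h₂r : ∀ x ∈ Set.Ioo (1 - ε : ℝ) 1, y₂ x = 0)
    (h₃l : ∀ x ∈ Set.Ioo (-1 : ℝ) (-1 + ε), y₃ x = 0)
    (h₃r : ∀ x ∈ Set.Ioo (1 - ε : ℝ) 1, y₃ x = 1 - x^2)
    (h₄l : ∀ x ∈ Set.Ioo (-1 : ℝ) (-1 + ε), y₄ x = 1 - x^2)
    (h₄r : ∀ x ∈ Set.Ioo (1 - ε : ℝ) 1, y₄ x = 0) :
    (∃ L₁ L₂ : ℝ,
      Filter.Tendsto (concOne A B y₁) (nhdsWithin (-1) (Set.Ioo (-1 : ℝ) 1)) (nhds L₁) ∧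
      Filter.Tendsto (concOne A B y₁) (nhdsWithin 1 (Set.Ioo (-1 : ℝ) 1)) (nhds L₂) ∧
      (-A * L₁, B * L₂) = ((0 : ℝ), -192 * B)) ∧
    (∃ L₁ L₂ : ℝ,
      Filter.Tendsto (concOne A B y₂) (nhdsWithin (-1) (Set.Ioo (-1 : ℝ) 1)) (nhds L₁) ∧
      Filter.Tendsto (concOne A B y₂) (nhdsWithin 1 (Set.Ioo (-1 : ℝ) 1)) (nhds L₂) ∧
      (-A * L₁, B * L₂) = ((-192 * A : ℝ), 0)) ∧
    (∃ L₁ L₂ : ℝ,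
      Filter.Tendsto (concOne A B y₃) (nhdsWithin (-1) (Set.Ioo (-1 : ℝ) 1)) (nhds L₁) ∧
      Filter.Tendsto (concOne A B y₃) (nhdsWithin 1 (Set.Ioo (-1 : ℝ) 1)) (nhds L₂) ∧
      (-A * L₁, B * L₂) = ((0 : ℝ), 48 * B * (A + 2))) ∧
    (∃ L₁ L₂ : ℝ,
      Filter.Tendsto (concOne A B y₄) (nhdsWithin (-1) (Set.Ioo (-1 : ℝ) 1)) (nhds L₁) ∧
      Filter.Tendsto (concOne A B y₄) (nhdsWithin 1 (Set.Ioo (-1 : ℝ) 1)) (nhds L₂) ∧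
      (-A * L₁, B * L₂) = ((48 * A * (B + 2) : ℝ), 0)) :=
  krall_Omega_values_general A B y₁ y₂ y₃ y₄ ε hε h₁l h₁r h₂l h₂r h₃l h₃r h₄l h₄r
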